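/- (Phase diagram for FDR thresholding.) In the ARW model with parameters 0 < r < β < 1, let q₂ = (β+r)²/(4r) and consider the FDR-type threshold t_p(q₂) = √(2q₂ log p). If r > (1−√(1−β))² then √p · Sep(t_p(q₂); ε_p, τ_p) → ∞ as p → ∞, while if r < (1−√(1−β))² then √p · Sep(t_p(q₂); ε_p, τ_p) → 0 as p → ∞. Hence the success region of FDR thresholding is r > (1−√(1−β))², which is strictly smaller than the success region r > ρ*(β) of ideal thresholding when 1/2 < β < 3/4. -/

import Mathlib

open Filter Set MeasureTheory

noncomputable def gaussPDF (t : ℝ) : ℝ := (Real.sqrt (2 * Real.pi))⁻¹ * Real.exp (-(t ^ 2) / 2)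

/-- standard normal CDF Φ -/
noncomputable def normCDF (t : ℝ) : ℝ := ∫ x in Set.Iic t, gaussPDF x

/-- survival function of |N(τ,1)| -/
noncomputable def psiBar (τ t : ℝ) : ℝ := (1 - normCDF (t - τ)) + normCDF (-t - τ)

noncomputable def tprFn (ε τ t : ℝ) : ℝ := ε * psiBar τ t

noncomputable def fprFn (ε t : ℝ) : ℝ := (1 - ε) * psiBar 0 t

noncomputable def idrFn (ε τ t : ℝ) : ℝ := ε * normCDF (-t - τ)

/-- clipping proxy separation -/
noncomputable def sepFn (ε τ t : ℝ) : ℝ :=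
  2 * τ * (tprFn ε τ t - 2 * idrFn ε τ t) / Real.sqrt (tprFn ε τ t + fprFn ε t)

/-- proxy false discovery rate -/
noncomputable def fdrFn (ε τ t : ℝ) : ℝ := fprFn ε t / (tprFn ε τ t + fprFn ε t)

/-- magnitude of derivative of TPR -/
noncomputable def tprD (ε τ t : ℝ) : ℝ := ε * (gaussPDF (t - τ) + gaussPDF (t + τ))

/-- magnitude of derivative of FPR -/
noncomputable def fprD (ε t : ℝ) : ℝ := 2 * (1 - ε) * gaussPDF t

/-- proxy local false discovery rate -/
noncomputable def lfdrFn (ε τ t : ℝ) : ℝ := fprD ε t / (tprD ε τ t + fprD ε t)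

noncomputable def rhoStar (β : ℝ) : ℝ :=
  if β ≤ 1 / 2 then 0 else if β ≤ 3 / 4 then β - 1 / 2 else (1 - Real.sqrt (1 - β)) ^ 2

noncomputable def qStar (r β : ℝ) : ℝ := if r ≤ β / 3 then 4 * r else (β + r) ^ 2 / (4 * r)

/-- sparsity ε_p = p^{-β} in the ARW model -/
noncomputable def epsP (β : ℝ) (p : ℕ) : ℝ := (p : ℝ) ^ (-β)

/-- strength τ_p = √(2 r log p) in the ARW model -/
noncomputable def tauP (r : ℝ) (p : ℕ) : ℝ := Real.sqrt (2 * r * Real.log p)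

/-- threshold t_p(q) = √(2 q log p) -/
noncomputable def tP (q : ℝ) (p : ℕ) : ℝ := Real.sqrt (2 * q * Real.log p)

/-- folded two-point mixture G_{ε,τ} -/
noncomputable def gMix (ε τ t : ℝ) : ℝ :=
  (1 - ε) * (normCDF t - normCDF (-t)) + ε * (normCDF (t - τ) - normCDF (-t - τ))

/-- ideal HC objective -/
noncomputable def hcObj (ε τ t : ℝ) : ℝ :=
  ((1 - gMix ε τ t) - psiBar 0 t) / Real.sqrt (gMix ε τ t * (1 - gMix ε τ t))

/-- useful feature discovery exponent δ(q) -/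
noncomputable def deltaExp (β r q : ℝ) : ℝ :=
  if q ≤ r then 1 - β else 1 - β - (Real.sqrt q - Real.sqrt r) ^ 2

/-- separation growth exponent γ(q) -/
noncomputable def gammaExp (β r q : ℝ) : ℝ :=
  deltaExp β r q - max (1 - q) (deltaExp β r q) / 2

/-!
Write `L = log p`, `t = √(2qL)`, `τ = √(2rL)` and `q = (β + r)² / (4r)`. Because
`√q √r = (β + r) / 2`, one has `β + (√q - √r)² = q`, so both `ε φ(t - τ)` and `φ(t)` equal
`p^{-q}` up to constant factors. The Gaussian tail bounds `1 - Φ(x) ≤ e^{-x²/2} / 2` and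
`Φ(x + 1/x) - Φ(x) ≥ e^{-3/2} φ(x) / x` then squeeze the separation:
`c p^{-q/2} ≤ Sep ≤ 2τ p^{-q/2}`, i.e. `√p · Sep` is `p^{(1-q)/2}` up to a factor between a
positive constant and `O(√L)`. It tends to `∞` or `0` according as `q < 1` or `q > 1`, and with
`s = √r`, `u = √(1 - β)` the condition `q < 1` reads `β + r < 2s`, i.e. `1 - s < u`, i.e.
`(1 - u)² < r`.
-/

open Real ProbabilityTheory Topology

section Gaussian

lemma gaussPDF_eq_gaussianPDFReal : gaussPDF = gaussianPDFReal 0 1 := by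
  ext x
  simp [gaussPDF, gaussianPDFReal]

lemma gaussPDF_pos (x : ℝ) : 0 < gaussPDF x := by
  rw [gaussPDF_eq_gaussianPDFReal]
  exact gaussianPDFReal_pos 0 1 x one_ne_zero

lemma integrable_gaussPDF : Integrable gaussPDF := by
  rw [gaussPDF_eq_gaussianPDFReal]
  exact integrable_gaussianPDFReal 0 1

lemma integral_gaussPDF : ∫ x, gaussPDF x = 1 := by
  rw [gaussPDF_eq_gaussianPDFReal]
  exact integral_gaussianPDFReal_eq_one 0 one_ne_zero

lemma gaussPDF_neg (x : ℝ) : gaussPDF (-x) = gaussPDF x := by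
  simp [gaussPDF]

lemma gaussPDF_le_gaussPDF {x y : ℝ} (hx : 0 ≤ x) (hxy : x ≤ y) :
    gaussPDF y ≤ gaussPDF x := by
  unfold gaussPDF
  gcongr

lemma one_sub_normCDF (x : ℝ) : 1 - normCDF x = ∫ t in Ioi x, gaussPDF t := by
  rw [← integral_gaussPDF, normCDF, ← integral_add_compl measurableSet_Iic integrable_gaussPDF,
    compl_Iic, add_sub_cancel_left]

lemma normCDF_neg (x : ℝ) : normCDF (-x) = 1 - normCDF x := by
  rw [one_sub_normCDF, normCDF, ← integral_comp_neg_Ioi]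
  simp only [gaussPDF_neg]

lemma normCDF_nonneg (x : ℝ) : 0 ≤ normCDF x :=
  setIntegral_nonneg measurableSet_Iic fun t _ => (gaussPDF_pos t).le

lemma normCDF_lt_one (x : ℝ) : normCDF x < 1 := by
  rw [← sub_pos, one_sub_normCDF, setIntegral_pos_iff_support_of_nonneg_ae
    (Eventually.of_forall fun t => (gaussPDF_pos t).le) integrable_gaussPDF.integrableOn,
    show Function.support gaussPDF = univ from eq_univ_of_forall fun t => (gaussPDF_pos t).ne',
    univ_inter]
  exact Measure.measure_Ioi_pos volume x

lemma normCDF_mono : Monotone normCDF := fun _ _ hab =>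
  setIntegral_mono_set integrable_gaussPDF.integrableOn
    (Eventually.of_forall fun t => (gaussPDF_pos t).le) (Iic_subset_Iic.mpr hab).eventuallyLE

lemma normCDF_sub_normCDF (a b : ℝ) : normCDF b - normCDF a = ∫ t in a..b, gaussPDF t :=
  intervalIntegral.integral_Iic_sub_Iic integrable_gaussPDF.integrableOn
    integrable_gaussPDF.integrableOn

lemma mul_gaussPDF_le_normCDF_sub_normCDF {a b : ℝ} (ha : 0 ≤ a) (hab : a ≤ b) :
    (b - a) * gaussPDF b ≤ normCDF b - normCDF a := by
  rw [normCDF_sub_normCDF]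
  have := intervalIntegral.integral_mono_on hab intervalIntegrable_const
    (integrable_gaussPDF.intervalIntegrable) fun t ht => gaussPDF_le_gaussPDF (ha.trans ht.1) ht.2
  simpa using this

lemma setIntegral_Ioi_comp_sub (f : ℝ → ℝ) (x : ℝ) :
    ∫ t in Ioi x, f (t - x) = ∫ t in Ioi 0, f t := by
  rw [← integral_indicator measurableSet_Ioi, ← integral_indicator measurableSet_Ioi,
    ← integral_sub_right_eq_self (fun t => (Ioi 0).indicator f t) x]
  congr 1 with t
  simp [indicator]

/-- The shift `t ↦ t - x` costs at most the factor `exp (-x²/2)` on `[x, ∞)`. -/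
lemma one_sub_normCDF_le {x : ℝ} (hx : 0 ≤ x) : 1 - normCDF x ≤ exp (-x ^ 2 / 2) / 2 := by
  have hshift : ∀ t ∈ Ioi x, gaussPDF t ≤ exp (-x ^ 2 / 2) * gaussPDF (t - x) := by
    intro t ht
    rw [gaussPDF, gaussPDF, mul_left_comm, ← exp_add]
    gcongr
    nlinarith [mem_Ioi.mp ht]
  have hhalf : ∫ t in Ioi (0 : ℝ), gaussPDF t = 1 / 2 := by
    have h0 := normCDF_neg 0
    rw [neg_zero] at h0
    rw [← one_sub_normCDF]
    linarith
  calc 1 - normCDF x ≤ ∫ t in Ioi x, exp (-x ^ 2 / 2) * gaussPDF (t - x) := by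
        rw [one_sub_normCDF]
        exact setIntegral_mono_on integrable_gaussPDF.integrableOn
          ((integrable_gaussPDF.comp_sub_right x).const_mul _).integrableOn measurableSet_Ioi hshift
    _ = exp (-x ^ 2 / 2) / 2 := by
        rw [integral_const_mul, setIntegral_Ioi_comp_sub gaussPDF, hhalf]
        ring

lemma exp_mul_gaussPDF_div_le {x : ℝ} (hx : 1 ≤ x) :
    exp (-3 / 2) * gaussPDF x / x ≤ normCDF (x + x⁻¹) - normCDF x := by
  have hx0 : 0 < x := one_pos.trans_le hx
  have hinv : x⁻¹ ≤ 1 := inv_le_one_of_one_le₀ hx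
  have hpdf : exp (-3 / 2) * gaussPDF x ≤ gaussPDF (x + x⁻¹) := by
    rw [gaussPDF, gaussPDF, mul_left_comm, ← exp_add]
    gcongr
    have : x * x⁻¹ = 1 := mul_inv_cancel₀ hx0.ne'
    nlinarith [inv_pos.mpr hx0]
  calc exp (-3 / 2) * gaussPDF x / x = x⁻¹ * (exp (-3 / 2) * gaussPDF x) := by ring
    _ ≤ (x + x⁻¹ - x) * gaussPDF (x + x⁻¹) := by
        rw [add_sub_cancel_left]
        gcongr
    _ ≤ normCDF (x + x⁻¹) - normCDF x :=
        mul_gaussPDF_le_normCDF_sub_normCDF hx0.le (by linarith [inv_pos.mpr hx0])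

end Gaussian

section Separation

variable {ε τ t : ℝ}

lemma psiBar_pos (τ t : ℝ) : 0 < psiBar τ t :=
  add_pos_of_pos_of_nonneg (sub_pos.mpr (normCDF_lt_one _)) (normCDF_nonneg _)

lemma psiBar_le_exp (hτ : 0 ≤ τ) (hτt : τ ≤ t) :
    psiBar τ t ≤ exp (-(t - τ) ^ 2 / 2) := by
  have hmono := normCDF_mono (show t - τ ≤ t + τ by linarith)
  have htail := one_sub_normCDF_le (sub_nonneg.mpr hτt)
  rw [psiBar, show -t - τ = -(t + τ) by ring, normCDF_neg]
  linarith

lemma tprFn_sub_two_mul_idrFn (ε τ t : ℝ) :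
    tprFn ε τ t - 2 * idrFn ε τ t = ε * (normCDF (t + τ) - normCDF (t - τ)) := by
  rw [tprFn, idrFn, psiBar, show -t - τ = -(t + τ) by ring, normCDF_neg]
  ring

lemma tprFn_le_exp (hε : 0 ≤ ε) (hτ : 0 ≤ τ) (hτt : τ ≤ t) :
    tprFn ε τ t ≤ ε * exp (-(t - τ) ^ 2 / 2) :=
  mul_le_mul_of_nonneg_left (psiBar_le_exp hτ hτt) hε

lemma fprFn_le_exp (hε : 0 ≤ ε) (ht : 0 ≤ t) : fprFn ε t ≤ exp (-t ^ 2 / 2) := by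
  have := psiBar_le_exp le_rfl ht
  rw [sub_zero] at this
  calc fprFn ε t ≤ 1 * psiBar 0 t := by
        rw [fprFn]
        gcongr
        · exact (psiBar_pos 0 t).le
        · linarith
    _ ≤ exp (-t ^ 2 / 2) := by rwa [one_mul]

lemma sepFn_le (hε : 0 < ε) (hε1 : ε ≤ 1) (hτ : 0 ≤ τ) :
    sepFn ε τ t ≤ 2 * τ * √(tprFn ε τ t) := by
  have htpr : 0 < tprFn ε τ t := mul_pos hε (psiBar_pos τ t)
  have hfpr : 0 ≤ fprFn ε t := mul_nonneg (sub_nonneg.mpr hε1) (psiBar_pos 0 t).le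
  have hidr : 0 ≤ idrFn ε τ t := mul_nonneg hε.le (normCDF_nonneg _)
  calc sepFn ε τ t
      = 2 * τ * ((tprFn ε τ t - 2 * idrFn ε τ t) / √(tprFn ε τ t + fprFn ε t)) := by
        rw [sepFn, mul_div_assoc]
    _ ≤ 2 * τ * (tprFn ε τ t / √(tprFn ε τ t)) := by
        gcongr <;> linarith
    _ = 2 * τ * √(tprFn ε τ t) := by rw [div_sqrt]

/-- The numerator `ε (Φ(t + τ) - Φ(t - τ))` is at least `ε` times the Gaussian mass of
`[t - τ, t - τ + (t - τ)⁻¹]`, which lies inside `[t - τ, t + τ]` once `(t - τ)⁻¹ ≤ 2τ`. -/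
lemma sepFn_ge (hε : 0 < ε) (hε1 : ε ≤ 1) (hτ : 0 ≤ τ) (htτ : 1 ≤ t - τ)
    (hwidth : 1 ≤ 2 * τ * (t - τ)) :
    2 * τ * (ε * (exp (-3 / 2) * gaussPDF (t - τ) / (t - τ)))
        / √(ε * exp (-(t - τ) ^ 2 / 2) + exp (-t ^ 2 / 2)) ≤ sepFn ε τ t := by
  have hx0 : 0 < t - τ := one_pos.trans_le htτ
  have hinv : (t - τ)⁻¹ ≤ 2 * τ := by
    rw [inv_le_iff_one_le_mul₀ hx0]
    linarith
  have hnum : exp (-3 / 2) * gaussPDF (t - τ) / (t - τ) ≤ normCDF (t + τ) - normCDF (t - τ) :=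
    (exp_mul_gaussPDF_div_le htτ).trans
      (by gcongr; exact normCDF_mono (by linarith))
  have hden : tprFn ε τ t + fprFn ε t ≤ ε * exp (-(t - τ) ^ 2 / 2) + exp (-t ^ 2 / 2) :=
    add_le_add (tprFn_le_exp hε.le hτ (by linarith)) (fprFn_le_exp hε.le (by linarith))
  have htpr : 0 < tprFn ε τ t := mul_pos hε (psiBar_pos τ t)
  have hfpr : 0 ≤ fprFn ε t := mul_nonneg (sub_nonneg.mpr hε1) (psiBar_pos 0 t).le
  have hnum_nonneg : 0 ≤ ε * (normCDF (t + τ) - normCDF (t - τ)) :=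
    mul_nonneg hε.le (sub_nonneg.mpr (normCDF_mono (by linarith)))
  rw [sepFn, tprFn_sub_two_mul_idrFn]
  gcongr

end Separation

section ARW

lemma tP_eq_sqrt_mul {q : ℝ} (hq : 0 ≤ q) (p : ℕ) : tP q p = √q * √(2 * log p) := by
  rw [tP, mul_comm 2 q, mul_assoc, sqrt_mul hq]

lemma exp_neg_sq_mul_sqrt_two_log (c : ℝ) {p : ℕ} (hp : 1 ≤ p) :
    exp (-(c * √(2 * log p)) ^ 2 / 2) = (p : ℝ) ^ (-c ^ 2) := by
  have hp0 : (0 : ℝ) < p := by exact_mod_cast hp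
  rw [mul_pow, sq_sqrt (by positivity), rpow_def_of_pos hp0]
  ring_nf

lemma tendsto_sqrt_two_log_atTop : Tendsto (fun p : ℕ => √(2 * log p)) atTop atTop :=
  tendsto_sqrt_atTop.comp <| (tendsto_log_atTop.comp tendsto_natCast_atTop_atTop).const_mul_atTop
    two_pos

lemma sqrt_mul_sqrt_rpow_neg {p : ℕ} (hp : 1 ≤ p) (q : ℝ) :
    √p * √((p : ℝ) ^ (-q)) = (p : ℝ) ^ ((1 - q) / 2) := by
  have hp0 : (0 : ℝ) < p := by exact_mod_cast hp
  have hpow : (p : ℝ) * (p : ℝ) ^ (-q) = (p : ℝ) ^ (1 - q) := by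
    rw [sub_eq_add_neg, rpow_add hp0, rpow_one]
  rw [← sqrt_mul hp0.le, hpow, sqrt_eq_rpow, ← rpow_mul hp0.le]
  ring_nf

variable {β r : ℝ}

lemma add_sq_sqrt_sub_sqrt (hr : 0 < r) (hβ : 0 ≤ β) :
    β + (√((β + r) ^ 2 / (4 * r)) - √r) ^ 2 = (β + r) ^ 2 / (4 * r) := by
  set q := (β + r) ^ 2 / (4 * r) with hq_def
  have hq : 0 ≤ q := by positivity
  have hqr : √q * √r = (β + r) / 2 := by
    rw [← sqrt_mul hq, show q * r = ((β + r) / 2) ^ 2 by rw [hq_def]; field_simp; ring,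
      sqrt_sq (by positivity)]
  linear_combination sq_sqrt hq + sq_sqrt hr.le - 2 * hqr

lemma lt_sq_add_div (hr : 0 < r) (hrβ : r < β) : r < (β + r) ^ 2 / (4 * r) := by
  rw [lt_div_iff₀ (by positivity)]
  nlinarith

lemma tauP_nonneg (r : ℝ) (p : ℕ) : 0 ≤ tauP r p := sqrt_nonneg _

lemma epsP_pos (β : ℝ) {p : ℕ} (hp : 1 ≤ p) : 0 < epsP β p :=
  rpow_pos_of_pos (by exact_mod_cast hp) _

lemma epsP_le_one (hβ : 0 ≤ β) {p : ℕ} (hp : 1 ≤ p) : epsP β p ≤ 1 :=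
  rpow_le_one_of_one_le_of_nonpos (by exact_mod_cast hp) (neg_nonpos.mpr hβ)

lemma exp_neg_sq_tP {q : ℝ} (hq : 0 ≤ q) {p : ℕ} (hp : 1 ≤ p) :
    exp (-tP q p ^ 2 / 2) = (p : ℝ) ^ (-q) := by
  rw [tP_eq_sqrt_mul hq, exp_neg_sq_mul_sqrt_two_log _ hp, sq_sqrt hq]

lemma epsP_mul_exp_neg_sq_tP_sub_tauP (hr : 0 < r) (hrβ : r < β) {p : ℕ} (hp : 1 ≤ p) :
    epsP β p * exp (-(tP ((β + r) ^ 2 / (4 * r)) p - tauP r p) ^ 2 / 2)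
      = (p : ℝ) ^ (-((β + r) ^ 2 / (4 * r))) := by
  have hp0 : (0 : ℝ) < p := by exact_mod_cast hp
  rw [show tauP r p = tP r p from rfl, tP_eq_sqrt_mul (by positivity), tP_eq_sqrt_mul hr.le,
    ← sub_mul, exp_neg_sq_mul_sqrt_two_log _ hp, epsP, ← rpow_add hp0]
  congr 1
  linarith [add_sq_sqrt_sub_sqrt hr (hr.trans hrβ).le]

lemma sqrt_mul_sepFn_le (hr : 0 < r) (hrβ : r < β) {p : ℕ} (hp : 1 ≤ p) :
    √p * sepFn (epsP β p) (tauP r p) (tP ((β + r) ^ 2 / (4 * r)) p)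
      ≤ 2 * tauP r p * (p : ℝ) ^ ((1 - (β + r) ^ 2 / (4 * r)) / 2) := by
  set q := (β + r) ^ 2 / (4 * r)
  have hτt : tauP r p ≤ tP q p := by
    rw [show tauP r p = tP r p from rfl, tP_eq_sqrt_mul hr.le, tP_eq_sqrt_mul (by positivity)]
    gcongr
    exact (lt_sq_add_div hr hrβ).le
  have htpr : tprFn (epsP β p) (tauP r p) (tP q p) ≤ (p : ℝ) ^ (-q) :=
    (tprFn_le_exp (epsP_pos β hp).le (tauP_nonneg r p) hτt).trans_eq
      (epsP_mul_exp_neg_sq_tP_sub_tauP hr hrβ hp)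
  have hτ0 : 0 ≤ 2 * tauP r p := by linarith [tauP_nonneg r p]
  calc √p * sepFn (epsP β p) (tauP r p) (tP q p)
      ≤ √p * (2 * tauP r p * √(tprFn (epsP β p) (tauP r p) (tP q p))) := by
        gcongr
        exact sepFn_le (epsP_pos β hp) (epsP_le_one (hr.trans hrβ).le hp) (tauP_nonneg r p)
    _ ≤ √p * (2 * tauP r p * √((p : ℝ) ^ (-q))) := by gcongr
    _ = 2 * tauP r p * (p : ℝ) ^ ((1 - q) / 2) := by
        rw [← sqrt_mul_sqrt_rpow_neg hp]
        ring

lemma exists_mul_rpow_le_sqrt_mul_sepFn (hr : 0 < r) (hrβ : r < β) :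
    ∃ K > 0, ∀ᶠ p : ℕ in atTop, K * (p : ℝ) ^ ((1 - (β + r) ^ 2 / (4 * r)) / 2)
      ≤ √p * sepFn (epsP β p) (tauP r p) (tP ((β + r) ^ 2 / (4 * r)) p) := by
  set q := (β + r) ^ 2 / (4 * r)
  have hq : 0 ≤ q := by positivity
  set a := √q - √r
  have ha : 0 < a := sub_pos.mpr (sqrt_lt_sqrt hr.le (lt_sq_add_div hr hrβ))
  refine ⟨√2 * √r * exp (-3 / 2) * (√(2 * π))⁻¹ / a, by positivity, ?_⟩
  have hs := tendsto_sqrt_two_log_atTop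
  filter_upwards [(hs.const_mul_atTop ha).eventually_ge_atTop 1,
    (hs.const_mul_atTop (by positivity : (0 : ℝ) < 2 * √r)).eventually_ge_atTop 1,
    eventually_ge_atTop 1] with p hx hτ hp
  set s := √(2 * log p)
  have hs0 : 0 < s := by nlinarith
  have hτ_eq : tauP r p = √r * s := tP_eq_sqrt_mul hr.le p
  have htτ : tP q p - tauP r p = a * s := by
    rw [hτ_eq, tP_eq_sqrt_mul hq]
    ring
  have hlow := sepFn_ge (epsP_pos β hp) (epsP_le_one (hr.trans hrβ).le hp) (tauP_nonneg r p)
    (htτ ▸ hx) (by rw [htτ, hτ_eq]; nlinarith)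
  have hnum : epsP β p * (exp (-3 / 2) * gaussPDF (tP q p - tauP r p) / (tP q p - tauP r p))
      = exp (-3 / 2) * (√(2 * π))⁻¹ * (p : ℝ) ^ (-q) / (a * s) := by
    rw [← epsP_mul_exp_neg_sq_tP_sub_tauP hr hrβ hp, gaussPDF, ← htτ]
    ring
  rw [epsP_mul_exp_neg_sq_tP_sub_tauP hr hrβ hp, exp_neg_sq_tP hq hp, hnum] at hlow
  have hy : 0 < (p : ℝ) ^ (-q) := rpow_pos_of_pos (by exact_mod_cast hp) _
  calc _ = √p * (2 * tauP r p * (exp (-3 / 2) * (√(2 * π))⁻¹ * (p : ℝ) ^ (-q) / (a * s))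
        / √((p : ℝ) ^ (-q) + (p : ℝ) ^ (-q))) := by
        rw [← sqrt_mul_sqrt_rpow_neg hp, hτ_eq, ← two_mul,
          sqrt_mul zero_le_two ((p : ℝ) ^ (-q))]
        field_simp
        linear_combination √((p : ℝ) ^ (-q)) ^ 2 * sq_sqrt zero_le_two + 2 * sq_sqrt hy.le
    _ ≤ _ := by gcongr

lemma tendsto_tauP_mul_rpow_nhds_zero (r : ℝ) {d : ℝ} (hd : d < 0) :
    Tendsto (fun p : ℕ => tauP r p * (p : ℝ) ^ d) atTop (𝓝 0) := by
  have hlog : Tendsto (fun x : ℝ => √(log x) * x ^ d) atTop (𝓝 0) := by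
    refine ((isLittleO_log_rpow_rpow_atTop (1 / 2) (neg_pos.mpr hd)).tendsto_div_nhds_zero).congr'
      ?_
    filter_upwards [eventually_gt_atTop 0] with x hx
    rw [sqrt_eq_rpow, div_eq_mul_inv, ← rpow_neg hx.le, neg_neg]
  have := (hlog.comp tendsto_natCast_atTop_atTop).const_mul √(2 * r)
  rw [mul_zero] at this
  refine this.congr fun p => ?_
  rw [tauP, sqrt_mul' _ (log_natCast_nonneg p), Function.comp_apply, mul_assoc]

end ARW

section Thresholds

variable {β r : ℝ}

lemma sq_add_div_lt_one (hβ : 0 ≤ β) (hβ1 : β < 1) (hr1 : r < 1)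
    (h : (1 - √(1 - β)) ^ 2 < r) : (β + r) ^ 2 / (4 * r) < 1 := by
  have hu := sq_sqrt (sub_nonneg.mpr hβ1.le)
  have hs := sq_sqrt (((sq_nonneg _).trans_lt h).le)
  have hs1 : √r < 1 := by nlinarith [sqrt_nonneg r]
  have hus : 1 - √r < √(1 - β) :=
    sub_lt_comm.mp (lt_of_pow_lt_pow_left₀ 2 (sqrt_nonneg r) (by rwa [hs]))
  have hβr : β + r < 2 * √r := by nlinarith
  rw [div_lt_one (by nlinarith)]
  nlinarith

lemma one_lt_sq_add_div (hr : 0 < r) (hβ : 0 ≤ β) (hβ1 : β < 1)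
    (h : r < (1 - √(1 - β)) ^ 2) : 1 < (β + r) ^ 2 / (4 * r) := by
  have hu := sq_sqrt (sub_nonneg.mpr hβ1.le)
  have hs := sq_sqrt hr.le
  have hu1 : √(1 - β) ≤ 1 := by nlinarith [sqrt_nonneg (1 - β)]
  have hus : √(1 - β) < 1 - √r :=
    lt_sub_comm.mp (lt_of_pow_lt_pow_left₀ 2 (by linarith) (by rwa [hs]))
  have hβr : 2 * √r < β + r := by nlinarith [sqrt_nonneg (1 - β)]
  rw [one_lt_div (by positivity)]
  nlinarith [sqrt_nonneg r]

lemma rhoStar_lt_sq_one_sub_sqrt (hβ : 1 / 2 < β) (hβ' : β < 3 / 4) :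
    rhoStar β < (1 - √(1 - β)) ^ 2 := by
  rw [rhoStar, if_neg (not_le.mpr hβ), if_pos hβ'.le]
  have hu : √(1 - β) ^ 2 = 1 - β := sq_sqrt (by linarith)
  have hu' : 1 / 2 < √(1 - β) := by nlinarith [sqrt_nonneg (1 - β)]
  nlinarith

end Thresholds

/-- Phase diagram for FDR thresholding t_p(q₂), q₂ = (β+r)²/(4r); its success
region r > (1−√(1−β))² is strictly smaller than the ideal one for 1/2 < β < 3/4. -/
theorem stmt9 (β r : ℝ) (hr1 : 0 < r) (hrβ : r < β) (hβ2 : β < 1) :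
    ((1 - Real.sqrt (1 - β)) ^ 2 < r →
      Filter.Tendsto
        (fun p : ℕ => Real.sqrt p * sepFn (epsP β p) (tauP r p) (tP ((β + r) ^ 2 / (4 * r)) p))
        Filter.atTop Filter.atTop) ∧
    (r < (1 - Real.sqrt (1 - β)) ^ 2 →
      Filter.Tendsto
        (fun p : ℕ => Real.sqrt p * sepFn (epsP β p) (tauP r p) (tP ((β + r) ^ 2 / (4 * r)) p))
        Filter.atTop (nhds 0)) ∧
    (∀ β' : ℝ, 1 / 2 < β' → β' < 3 / 4 → rhoStar β' < (1 - Real.sqrt (1 - β')) ^ 2) := by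
  have hβ : 0 ≤ β := (hr1.trans hrβ).le
  obtain ⟨K, hK, hlow⟩ := exists_mul_rpow_le_sqrt_mul_sepFn hr1 hrβ
  refine ⟨fun h => ?_, fun h => ?_, fun _ => rhoStar_lt_sq_one_sub_sqrt⟩
  · have hq := sq_add_div_lt_one hβ hβ2 (hrβ.trans hβ2) h
    refine tendsto_atTop_mono' atTop hlow (Tendsto.const_mul_atTop hK ?_)
    exact (tendsto_rpow_atTop (by linarith)).comp tendsto_natCast_atTop_atTop
  · have hq := one_lt_sq_add_div hr1 hβ hβ2 h
    have hupper := (tendsto_tauP_mul_rpow_nhds_zero r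
      (show (1 - (β + r) ^ 2 / (4 * r)) / 2 < 0 by linarith)).const_mul 2
    rw [mul_zero] at hupper
    refine squeeze_zero' (hlow.mono fun p hp => le_trans (by positivity) hp)
      ((eventually_ge_atTop 1).mono fun p hp => ?_) hupper
    rw [← mul_assoc]
    exact sqrt_mul_sepFn_le hr1 hrβ hp
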